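/- Let M > 0, h ≥ 1, R > 1, and let ω ∈ C^∞(ℝ) satisfy |ω(ξ)| ≤ 1 for all ξ, ω(ξ) = 0 for |ξ| ≤ 1, and ω constant on each of {ξ ≥ R} and {ξ ≤ −R}. Define λ(x,ξ) := M·ω(ξ/h)·∫₀ˣ ⟨y⟩^{-1} dy. Then for every integer β ≥ 1 there exists C_β > 0 (depending on β, M but not on h, x, ξ) such that, for either choice of sign, |∂_x^β e^{±λ(x,ξ)}| ≤ C_β·⟨x⟩^{−β}·e^{±λ(x,ξ)} for all x, ξ ∈ ℝ. -/

import Mathlib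

/-!
With `F x = ∫₀ˣ ⟨y⟩⁻¹ dy` and `f = exp (a F)` we have `f' = a ⟨x⟩⁻¹ f`, so by induction
`∂^β f = p_β f` where `p_β` is a polynomial in `a`, `x` and `⟨x⟩⁻¹`. Give the monomial
`aᵏ xⁱ ⟨x⟩⁻ʲ` the weight `i - j`. Differentiation lowers weights by one (because
`(⟨x⟩⁻¹)' = -x ⟨x⟩⁻³`), and so does multiplication by `a ⟨x⟩⁻¹`; hence every monomial of
`p_β` has weight at most `-β`. As `|x| ≤ ⟨x⟩` and `|a| = |M ω(ξ/h)| ≤ M`, this gives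
`|p_β| ≤ C_β ⟨x⟩^(-β)` uniformly in `h` and `ξ`.
-/

open MeasureTheory Real

noncomputable section

/-- The Japanese bracket `⟨x⟩`. -/
def jb (x : ℝ) : ℝ := Real.sqrt (1 + x ^ 2)

lemma jb_pos (x : ℝ) : 0 < jb x := Real.sqrt_pos.2 (by positivity)

lemma one_le_jb (x : ℝ) : 1 ≤ jb x := Real.one_le_sqrt.2 (by nlinarith)

lemma abs_le_jb (x : ℝ) : |x| ≤ jb x := by
  rw [← Real.sqrt_sq_eq_abs]
  exact Real.sqrt_le_sqrt (by nlinarith)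

lemma continuous_jb_inv : Continuous fun x => (jb x)⁻¹ :=
  ((continuous_const.add (continuous_pow 2)).sqrt).inv₀ fun x => (jb_pos x).ne'

lemma hasDerivAt_jb_inv (x : ℝ) :
    HasDerivAt (fun x => (jb x)⁻¹) (-(x * (jb x)⁻¹ ^ 3)) x := by
  have hsq : HasDerivAt (fun x : ℝ => 1 + x ^ 2) (2 * x) x := by
    simpa using (hasDerivAt_pow 2 x).const_add 1
  have hjb : HasDerivAt jb (x * (jb x)⁻¹) x := by
    have : HasDerivAt jb _ x := hsq.sqrt (by positivity)
    convert this using 1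
    rw [jb]
    field_simp
  refine (hjb.fun_inv (jb_pos x).ne').congr_deriv ?_
  ring

lemma hasDerivAt_integral_jb_inv (x : ℝ) :
    HasDerivAt (fun u => ∫ y in (0:ℝ)..u, (jb y)⁻¹) (jb x)⁻¹ x :=
  intervalIntegral.integral_hasDerivAt_right (continuous_jb_inv.intervalIntegrable _ _)
    continuous_jb_inv.aestronglyMeasurable.stronglyMeasurableAtFilter
    continuous_jb_inv.continuousAt

lemma hasDerivAt_exp_mul_integral_jb_inv (a x : ℝ) :
    HasDerivAt (fun x => Real.exp (a * ∫ y in (0:ℝ)..x, (jb y)⁻¹))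
      (a * (jb x)⁻¹ * Real.exp (a * ∫ y in (0:ℝ)..x, (jb y)⁻¹)) x := by
  convert ((hasDerivAt_integral_jb_inv x).const_mul a).exp using 1
  ring

lemma hasDerivAt_jb_monomial (c a : ℝ) (k i j : ℕ) (x : ℝ) :
    HasDerivAt (fun x => c * a ^ k * x ^ i * (jb x)⁻¹ ^ j)
      (c * i * a ^ k * x ^ (i - 1) * (jb x)⁻¹ ^ j
        - c * j * a ^ k * x ^ (i + 1) * (jb x)⁻¹ ^ (j + 2)) x := by
  have hpow : HasDerivAt (fun x : ℝ => c * a ^ k * x ^ i) (c * a ^ k * (i * x ^ (i - 1))) x :=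
    (hasDerivAt_pow i x).const_mul _
  have hinv : HasDerivAt (fun x => (jb x)⁻¹ ^ j)
      (j * (jb x)⁻¹ ^ (j - 1) * -(x * (jb x)⁻¹ ^ 3)) x :=
    (hasDerivAt_jb_inv x).pow j
  refine (hpow.fun_mul hinv).congr_deriv ?_
  cases j with
  | zero => simp; ring
  | succ n => push_cast; ring

lemma abs_jb_monomial_le {A c a : ℝ} {k i j : ℕ} {m : ℤ} (ha : |a| ≤ A)
    (hij : (i : ℤ) - j ≤ m) (x : ℝ) :
    |c * a ^ k * x ^ i * (jb x)⁻¹ ^ j| ≤ |c| * A ^ k * jb x ^ m := by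
  have hjb := jb_pos x
  have hA : 0 ≤ A := (abs_nonneg a).trans ha
  have hx : |x| ^ i * (jb x)⁻¹ ^ j ≤ jb x ^ m :=
    calc |x| ^ i * (jb x)⁻¹ ^ j ≤ jb x ^ i * (jb x)⁻¹ ^ j := by
          gcongr
          exact abs_le_jb x
      _ = jb x ^ ((i : ℤ) - j) := by
          rw [zpow_sub₀ hjb.ne', zpow_natCast, zpow_natCast, inv_pow, div_eq_mul_inv]
      _ ≤ jb x ^ m := zpow_le_zpow_right₀ (one_le_jb x) hij
  calc |c * a ^ k * x ^ i * (jb x)⁻¹ ^ j|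
      = (|c| * |a| ^ k) * (|x| ^ i * (jb x)⁻¹ ^ j) := by
        simp only [abs_mul, abs_pow, abs_inv, abs_of_pos hjb]
        ring
    _ ≤ (|c| * A ^ k) * jb x ^ m := by gcongr

inductive IsJbPoly (m : ℤ) : (ℝ → ℝ → ℝ) → Prop
  | zero : IsJbPoly m 0
  | monomial (c : ℝ) (k i j : ℕ) (hij : (i : ℤ) - j ≤ m) :
      IsJbPoly m fun a x => c * a ^ k * x ^ i * (jb x)⁻¹ ^ j
  | add {p q : ℝ → ℝ → ℝ} : IsJbPoly m p → IsJbPoly m q → IsJbPoly m (p + q)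

namespace IsJbPoly

variable {m : ℤ} {p : ℝ → ℝ → ℝ}

lemma mul_jb_inv (hp : IsJbPoly m p) :
    IsJbPoly (m - 1) fun a x => a * (jb x)⁻¹ * p a x := by
  induction hp with
  | zero =>
    convert (zero : IsJbPoly (m - 1) 0) using 1
    funext a x
    simp
  | monomial c k i j hij =>
    convert monomial (m := m - 1) c (k + 1) i (j + 1) (by push_cast; omega) using 1
    funext a x
    ring
  | add _ _ hp hq =>
    convert hp.add hq using 1
    funext a x
    simp only [Pi.add_apply]
    ring

lemma exists_hasDerivAt (hp : IsJbPoly m p) :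
    ∃ p', IsJbPoly (m - 1) p' ∧ ∀ a x, HasDerivAt (p a) (p' a x) x := by
  induction hp with
  | zero => exact ⟨0, zero, fun _ x => hasDerivAt_const x 0⟩
  | monomial c k i j hij =>
    have hlow : IsJbPoly (m - 1)
        fun a x => -(c * j) * a ^ k * x ^ (i + 1) * (jb x)⁻¹ ^ (j + 2) :=
      monomial _ _ _ _ (by push_cast; omega)
    cases i with
    | zero =>
      refine ⟨_, hlow, fun a x => ?_⟩
      simpa [neg_mul] using hasDerivAt_jb_monomial c a k 0 j x
    | succ i =>
      refine ⟨_, (monomial (c * (i + 1 : ℕ)) k i j (by push_cast at hij ⊢; omega)).add hlow,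
        fun a x => ?_⟩
      convert hasDerivAt_jb_monomial c a k (i + 1) j x using 1
      simp only [Pi.add_apply, Nat.add_sub_cancel]
      push_cast
      ring
  | add _ _ hp hq =>
    obtain ⟨p', hp', hpd⟩ := hp
    obtain ⟨q', hq', hqd⟩ := hq
    exact ⟨p' + q', hp'.add hq', fun a x => (hpd a x).add (hqd a x)⟩

lemma exists_bound (hp : IsJbPoly m p) (A : ℝ) :
    ∃ C > 0, ∀ a x, |a| ≤ A → |p a x| ≤ C * jb x ^ m := by
  induction hp with
  | zero => exact ⟨1, one_pos, fun a x _ => by simpa using (zpow_pos (jb_pos x) m).le⟩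
  | monomial c k i j hij =>
    refine ⟨|c| * |A| ^ k + 1, by positivity, fun a x ha => ?_⟩
    calc _ ≤ |c| * |A| ^ k * jb x ^ m := abs_jb_monomial_le (ha.trans (le_abs_self A)) hij x
      _ ≤ _ := mul_le_mul_of_nonneg_right (by linarith) (zpow_pos (jb_pos x) m).le
  | @add p q _ _ hp hq =>
    obtain ⟨C₁, hC₁, hp⟩ := hp
    obtain ⟨C₂, hC₂, hq⟩ := hq
    refine ⟨C₁ + C₂, by positivity, fun a x ha => ?_⟩
    calc |p a x + q a x| ≤ |p a x| + |q a x| := abs_add_le _ _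
      _ ≤ (C₁ + C₂) * jb x ^ m := by linarith [hp a x ha, hq a x ha]

end IsJbPoly

lemma exists_iteratedDeriv_exp_mul_integral_jb_inv_eq (β : ℕ) :
    ∃ p, IsJbPoly (-β) p ∧ ∀ a,
      iteratedDeriv β (fun x => Real.exp (a * ∫ y in (0:ℝ)..x, (jb y)⁻¹)) =
        fun x => p a x * Real.exp (a * ∫ y in (0:ℝ)..x, (jb y)⁻¹) := by
  induction β with
  | zero => exact ⟨fun _ _ => 1, by simpa using IsJbPoly.monomial 1 0 0 0 le_rfl, by simp⟩
  | succ β ih =>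
    obtain ⟨p, hp, hpβ⟩ := ih
    obtain ⟨p', hp', hpd⟩ := hp.exists_hasDerivAt
    refine ⟨p' + fun a x => a * (jb x)⁻¹ * p a x,
      by simpa [sub_eq_add_neg, add_comm] using hp'.add hp.mul_jb_inv, fun a => ?_⟩
    ext x
    rw [iteratedDeriv_succ, hpβ,
      ((hpd a x).fun_mul (hasDerivAt_exp_mul_integral_jb_inv a x)).deriv]
    simp only [Pi.add_apply]
    ring

theorem stmt6_general (M : ℝ) (hM : 0 < M)
    (ω : ℝ → ℝ) (hωb : ∀ ξ : ℝ, |ω ξ| ≤ 1) :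
    ∀ β : ℕ, 1 ≤ β → ∃ C > 0, ∀ h : ℝ, 1 ≤ h → ∀ x ξ : ℝ,
      ∀ s : ℝ, s = 1 ∨ s = -1 →
        |iteratedDeriv β
            (fun x' => Real.exp
              (s * (M * ω (ξ / h) * ∫ y in (0:ℝ)..x', (jb y)⁻¹))) x| ≤
          C * jb x ^ (-(β : ℝ)) *
            Real.exp (s * (M * ω (ξ / h) * ∫ y in (0:ℝ)..x, (jb y)⁻¹)) := by
  intro β _
  obtain ⟨p, hp, hpβ⟩ := exists_iteratedDeriv_exp_mul_integral_jb_inv_eq β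
  obtain ⟨C, hC, hpC⟩ := hp.exists_bound M
  refine ⟨C, hC, fun h _ x ξ s hs => ?_⟩
  have ha : |s * M * ω (ξ / h)| ≤ M := by
    have hs1 : |s| = 1 := by rcases hs with rfl | rfl <;> simp
    rw [abs_mul, abs_mul, hs1, abs_of_pos hM, one_mul]
    exact mul_le_of_le_one_right hM.le (hωb _)
  simp only [← mul_assoc s] at hpβ ⊢
  rw [hpβ, abs_mul, abs_of_pos (Real.exp_pos _)]
  gcongr
  simpa [← Real.rpow_intCast] using hpC _ x ha

/-- estimates for `∂_x^β e^{±λ(x,ξ)}`, `β ≥ 1`, where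
`λ(x,ξ) = M·ω(ξ/h)·∫₀ˣ ⟨y⟩⁻¹ dy`; the constant may depend on `β, M` but not on
`h, x, ξ`. -/
theorem stmt6 (M R : ℝ) (hM : 0 < M) (hR : 1 < R)
    (ω : ℝ → ℝ) (hω : ContDiff ℝ (⊤ : ℕ∞) ω) (hωb : ∀ ξ : ℝ, |ω ξ| ≤ 1)
    (hω0 : ∀ ξ : ℝ, |ξ| ≤ 1 → ω ξ = 0)
    (hωcp : ∀ ξ₁ ξ₂ : ℝ, R ≤ ξ₁ → R ≤ ξ₂ → ω ξ₁ = ω ξ₂)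
    (hωcm : ∀ ξ₁ ξ₂ : ℝ, ξ₁ ≤ -R → ξ₂ ≤ -R → ω ξ₁ = ω ξ₂) :
    ∀ β : ℕ, 1 ≤ β → ∃ C > 0, ∀ h : ℝ, 1 ≤ h → ∀ x ξ : ℝ,
      ∀ s : ℝ, s = 1 ∨ s = -1 →
        |iteratedDeriv β
            (fun x' => Real.exp
              (s * (M * ω (ξ / h) * ∫ y in (0:ℝ)..x', (jb y)⁻¹))) x| ≤
          C * jb x ^ (-(β : ℝ)) *
            Real.exp (s * (M * ω (ξ / h) * ∫ y in (0:ℝ)..x, (jb y)⁻¹)) :=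
  stmt6_general M hM ω hωb
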